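/- arXiv:1801.05587 — 2 statements merged into one kernel-verified Lean document; each statement's English description precedes it below -/
import Mathlib

section
/- Let v ∈ C¹(ℝ) with v' Lipschitz with constant L₂ and ‖v'‖_{L∞} ≤ L₁, let u, ũ ∈ L¹(ℝ) and w ∈ W^{1,1}(ℝ) with w' ∈ L∞(ℝ). Then ∫_ℝ |v'((u∗w)(x))·(u∗w')(x) − v'((ũ∗w)(x))·(ũ∗w')(x)| dx ≤ L₁ ‖w'‖_{L¹} ‖u−ũ‖_{L¹} + L₂ ‖u‖_{L¹} ‖w'‖_{L∞} ‖w‖_{L¹} ‖u−ũ‖_{L¹}. -/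
/-!
Write `A = u ∗ w`, `B = u ∗ w'` and `Ã, B̃` for the same convolutions of `ũ`. Splitting
`v'(A) B − v'(Ã) B̃ = (v'(A) − v'(Ã)) B + v'(Ã) (B − B̃)` bounds the integrand pointwise by
`L₂ |A − Ã| |B| + L₁ |B − B̃|`. Here `|B| ≤ ‖w'‖_∞ ‖u‖_{L¹}`, while `|A − Ã|` and `|B − B̃|` are
dominated by the convolutions `|u − ũ| ∗ |w|` and `|u − ũ| ∗ |w'|`, whose integrals factor by
Fubini into `‖u − ũ‖_{L¹} ‖w‖_{L¹}` and `‖u − ũ‖_{L¹} ‖w'‖_{L¹}`.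
-/

open MeasureTheory ContinuousLinearMap
open scoped Convolution

section Splitting

variable {α : Type*} [Ring α] [LinearOrder α] [IsOrderedRing α]

theorem abs_mul_sub_mul_le (a a' b b' : α) :
    |a * b - a' * b'| ≤ |a - a'| * |b| + |a'| * |b - b'| :=
  calc |a * b - a' * b'| = |(a - a') * b + a' * (b - b')| := by congr 1; noncomm_ring
    _ ≤ |a - a'| * |b| + |a'| * |b - b'| := by
      simpa only [abs_mul] using abs_add_le ((a - a') * b) (a' * (b - b'))

theorem abs_comp_mul_sub_comp_mul_le {φ : α → α} {L₁ L₂ : α}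
    (hlip : ∀ a a', |φ a - φ a'| ≤ L₂ * |a - a'|) (hbound : ∀ a, |φ a| ≤ L₁) (a a' b b' : α) :
    |φ a * b - φ a' * b'| ≤ L₂ * |a - a'| * |b| + L₁ * |b - b'| :=
  (abs_mul_sub_mul_le _ _ _ _).trans <| add_le_add
    (mul_le_mul_of_nonneg_right (hlip a a') (abs_nonneg b))
    (mul_le_mul_of_nonneg_right (hbound a') (abs_nonneg _))

end Splitting

section Convolution

variable {G : Type*} [AddGroup G] [MeasurableSpace G] {μ : Measure G} {f f₂ g : G → ℝ}

theorem abs_convolution_mul_le (x : G) :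
    |(f ⋆[mul ℝ ℝ, μ] g) x| ≤ (|f| ⋆[mul ℝ ℝ, μ] |g|) x := by
  simpa only [convolution_mul, Pi.abs_apply, abs_mul] using
    abs_integral_le_integral_abs (f := fun t => f t * g (x - t)) (μ := μ)

theorem convolution_mul_abs_nonneg (x : G) : 0 ≤ (|f| ⋆[mul ℝ ℝ, μ] |g|) x :=
  integral_nonneg fun _ => mul_nonneg (abs_nonneg _) (abs_nonneg _)

theorem abs_convolution_mul_le_mul_integral {C : ℝ} (hf : Integrable f μ) (hg : ∀ x, |g x| ≤ C)
    (x : G) : |(f ⋆[mul ℝ ℝ, μ] g) x| ≤ C * ∫ y, |f y| ∂μ :=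
  calc |(f ⋆[mul ℝ ℝ, μ] g) x| ≤ (|f| ⋆[mul ℝ ℝ, μ] |g|) x := abs_convolution_mul_le x
    _ ≤ ∫ y, |f y| * C ∂μ :=
      integral_mono_of_nonneg (.of_forall fun _ => mul_nonneg (abs_nonneg _) (abs_nonneg _))
        (hf.abs.mul_const C) (.of_forall fun y => mul_le_mul_of_nonneg_left (hg _) (abs_nonneg _))
    _ = C * ∫ y, |f y| ∂μ := by rw [integral_mul_const, mul_comm]

variable [MeasurableAdd₂ G] [MeasurableNeg G] [SFinite μ] [μ.IsAddRightInvariant]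

theorem ae_abs_convolution_mul_sub_le (hf : Integrable f μ) (hf₂ : Integrable f₂ μ)
    (hg : Integrable g μ) :
    ∀ᵐ x ∂μ, |(f ⋆[mul ℝ ℝ, μ] g) x - (f₂ ⋆[mul ℝ ℝ, μ] g) x| ≤
      (|f - f₂| ⋆[mul ℝ ℝ, μ] |g|) x := by
  filter_upwards [hf.ae_convolution_exists (mul ℝ ℝ) hg,
    hf₂.ae_convolution_exists (mul ℝ ℝ) hg] with x hfg hf₂g
  have hsub : (f ⋆[mul ℝ ℝ, μ] g) x - (f₂ ⋆[mul ℝ ℝ, μ] g) x = ((f - f₂) ⋆[mul ℝ ℝ, μ] g) x := by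
    simp only [convolution_def, map_sub, sub_apply, Pi.sub_apply, integral_sub hfg hf₂g]
  rw [hsub]
  exact abs_convolution_mul_le x

theorem integrable_convolution_mul_abs (hf : Integrable f μ) (hg : Integrable g μ) :
    Integrable (|f| ⋆[mul ℝ ℝ, μ] |g|) μ :=
  hf.abs.integrable_convolution (mul ℝ ℝ) hg.abs

theorem integral_convolution_mul_abs (hf : Integrable f μ) (hg : Integrable g μ) :
    ∫ x, (|f| ⋆[mul ℝ ℝ, μ] |g|) x ∂μ = (∫ x, |f x| ∂μ) * ∫ x, |g x| ∂μ :=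
  integral_convolution (mul ℝ ℝ) hf.abs hg.abs

end Convolution

theorem deriv_velocity_L1_stability_general (v u u2 w : ℝ → ℝ) (L₁ L₂ Cw' : ℝ)
    (hv'lip : ∀ a b : ℝ, |deriv v a - deriv v b| ≤ L₂ * |a - b|)
    (hv'b : ∀ a : ℝ, |deriv v a| ≤ L₁)
    (hu : Integrable u) (hu2 : Integrable u2)
    (hw : Integrable w)
    (hw'i : Integrable (deriv w)) (hw'b : ∀ x, |deriv w x| ≤ Cw') :
    ∫ x : ℝ, |deriv v (∫ y : ℝ, u y * w (x - y)) * (∫ y : ℝ, u y * deriv w (x - y))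
        - deriv v (∫ y : ℝ, u2 y * w (x - y)) * (∫ y : ℝ, u2 y * deriv w (x - y))| ≤
      L₁ * (∫ x : ℝ, |deriv w x|) * (∫ x : ℝ, |u x - u2 x|)
      + L₂ * (∫ x : ℝ, |u x|) * Cw' * (∫ x : ℝ, |w x|) * (∫ x : ℝ, |u x - u2 x|) := by
  simp only [← convolution_mul]
  have hL₁ : 0 ≤ L₁ := (abs_nonneg _).trans (hv'b 0)
  have hL₂ : 0 ≤ L₂ := by simpa using (abs_nonneg _).trans (hv'lip 1 0)
  set K := L₂ * (∫ x, |u x|) * Cw'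
  set G₀ := |u - u2| ⋆[mul ℝ ℝ] |w|
  set G₁ := |u - u2| ⋆[mul ℝ ℝ] |deriv w|
  have hG₀ : Integrable G₀ := integrable_convolution_mul_abs (hu.sub hu2) hw
  have hG₁ : Integrable G₁ := integrable_convolution_mul_abs (hu.sub hu2) hw'i
  calc _ ≤ ∫ x, L₁ * G₁ x + K * G₀ x := by
        refine integral_mono_of_nonneg (.of_forall fun _ => abs_nonneg _)
          ((hG₁.const_mul _).add (hG₀.const_mul _)) ?_
        filter_upwards [ae_abs_convolution_mul_sub_le hu hu2 hw,
          ae_abs_convolution_mul_sub_le hu hu2 hw'i] with x h₀ h₁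
        calc _ ≤ _ := abs_comp_mul_sub_comp_mul_le hv'lip hv'b _ _ _ _
          _ ≤ L₂ * G₀ x * (Cw' * ∫ x, |u x|) + L₁ * G₁ x := by
            gcongr
            · exact mul_nonneg hL₂ (convolution_mul_abs_nonneg x)
            · exact abs_convolution_mul_le_mul_integral hu hw'b x
          _ = L₁ * G₁ x + K * G₀ x := by ring
    _ = _ := by
      rw [integral_add (hG₁.const_mul _) (hG₀.const_mul _), integral_const_mul, integral_const_mul,
        integral_convolution_mul_abs (hu.sub hu2) hw'i,
        integral_convolution_mul_abs (hu.sub hu2) hw]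
      simp only [K, Pi.sub_apply]
      ring

/-- Estimate on the `L¹` distance of the `x`-derivatives of `V = v∘(u∗w)` and
`Ṽ = v∘(u2∗w)`: with `‖v'‖_∞ ≤ L₁`, `v'` Lipschitz with constant `L₂`,
`u, u2 ∈ L¹`, `w ∈ W^{1,1}` with `|w'| ≤ Cw'`,
`∫ |v'(u∗w)·(u∗w') − v'(u2∗w)·(u2∗w')|
  ≤ L₁‖w'‖_{L¹}‖u−u2‖_{L¹} + L₂‖u‖_{L¹}‖w'‖_{L∞}‖w‖_{L¹}‖u−u2‖_{L¹}`. -/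
theorem deriv_velocity_L1_stability (v u u2 w : ℝ → ℝ) (L₁ L₂ Cw' : ℝ)
    (hv : ContDiff ℝ 1 v)
    (hv'lip : ∀ a b : ℝ, |deriv v a - deriv v b| ≤ L₂ * |a - b|)
    (hv'b : ∀ a : ℝ, |deriv v a| ≤ L₁)
    (hu : Integrable u) (hu2 : Integrable u2)
    (hw : Integrable w) (hwC : ContDiff ℝ 1 w)
    (hw'i : Integrable (deriv w)) (hw'b : ∀ x, |deriv w x| ≤ Cw') :
    ∫ x : ℝ, |deriv v (∫ y : ℝ, u y * w (x - y)) * (∫ y : ℝ, u y * deriv w (x - y))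
        - deriv v (∫ y : ℝ, u2 y * w (x - y)) * (∫ y : ℝ, u2 y * deriv w (x - y))| ≤
      L₁ * (∫ x : ℝ, |deriv w x|) * (∫ x : ℝ, |u x - u2 x|)
      + L₂ * (∫ x : ℝ, |u x|) * Cw' * (∫ x : ℝ, |w x|) * (∫ x : ℝ, |u x - u2 x|) :=
  deriv_velocity_L1_stability_general v u u2 w L₁ L₂ Cw' hv'lip hv'b hu hu2 hw hw'i hw'b
end

section
/- Consider the Lax–Friedrichs update ρ_j^{n+1} = ρ_j^n − λ(F_{j+1/2}^n − F_{j−1/2}^n) with F_{j+1/2} = ½(f_j v_j + f_{j+1} v_{j+1}) − (α/2)(ρ_{j+1}−ρ_j), where f_j = f(ρ_j) with f : ℝ → ℝ differentiable, f(0)=0, |f'| ≤ M, and v_j ∈ [0, V] for all j. If α ≥ MV and λ(α + 2MV) ≤ 1, then ρ_j^n ≥ 0 for all j implies ρ_j^{n+1} ≥ 0 for all j. -/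
lemma abs_le_mul_abs_of_abs_deriv_le {f : ℝ → ℝ} {M : ℝ} (hf : Differentiable ℝ f)
    (hf0 : f 0 = 0) (hf' : ∀ x, |deriv f x| ≤ M) (x : ℝ) : |f x| ≤ M * |x| := by
  simpa [hf0] using Convex.norm_image_sub_le_of_norm_deriv_le (fun y _ => hf y)
    (fun y _ => hf' y) convex_univ (Set.mem_univ 0) (Set.mem_univ x)

lemma abs_mul_le_of_abs_le_mul {x y v M V alpha : ℝ} (hy : |y| ≤ M * |x|)
    (hv : v ∈ Set.Icc 0 V) (hMV : M * V ≤ alpha) : |y * v| ≤ alpha * |x| :=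
  calc |y * v| = |y| * v := by rw [abs_mul, abs_of_nonneg hv.1]
    _ ≤ M * |x| * V := mul_le_mul hy hv.2 hv.1 ((abs_nonneg y).trans hy)
    _ = M * V * |x| := by ring
    _ ≤ alpha * |x| := mul_le_mul_of_nonneg_right hMV (abs_nonneg x)

lemma laxFriedrichs_step_nonneg {a b c ga gb gc lam alpha : ℝ} (hlam : 0 ≤ lam)
    (hlamAlpha : lam * alpha ≤ 1) (hb : 0 ≤ b) (ha : |ga| ≤ alpha * a)
    (hc : |gc| ≤ alpha * c) :
    0 ≤ b - lam * (((gb + gc) / 2 - alpha / 2 * (c - b))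
      - ((ga + gb) / 2 - alpha / 2 * (b - a))) := by
  -- The step is a combination of `b`, `alpha * c - gc` and `alpha * a + ga` with nonnegative weights.
  have hcenter : 0 ≤ (1 - lam * alpha) * b := mul_nonneg (by linarith) hb
  have hright : 0 ≤ lam / 2 * (alpha * c - gc) :=
    mul_nonneg (by linarith) (by linarith [le_abs_self gc])
  have hleft : 0 ≤ lam / 2 * (alpha * a + ga) :=
    mul_nonneg (by linarith) (by linarith [neg_abs_le ga])
  linarith

/-- Positivity preservation of the Lax–Friedrichs scheme
`ρ_j^{n+1} = ρ_j − λ(F_{j+1/2} − F_{j−1/2})` with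
`F_{j+1/2} = ½(f(ρ_j)v_j + f(ρ_{j+1})v_{j+1}) − (α/2)(ρ_{j+1}−ρ_j)`:
if `f` is differentiable with `f(0)=0`, `|f'| ≤ M`, `v_j ∈ [0,V]`, `α ≥ MV`
and `λ(α + 2MV) ≤ 1`, then nonnegativity of `(ρ_j)` is preserved. -/
theorem laxFriedrichs_positivity (f : ℝ → ℝ) (M V lam alpha : ℝ) (ρ v : ℤ → ℝ)
    (hf : Differentiable ℝ f) (hf0 : f 0 = 0)
    (hf' : ∀ x : ℝ, |deriv f x| ≤ M)
    (hv : ∀ j : ℤ, v j ∈ Set.Icc 0 V)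
    (hlam : 0 < lam) (halpha : M * V ≤ alpha)
    (hCFL : lam * (alpha + 2 * M * V) ≤ 1)
    (hρ : ∀ j : ℤ, 0 ≤ ρ j) :
    ∀ j : ℤ, 0 ≤ ρ j - lam *
      (((f (ρ j) * v j + f (ρ (j+1)) * v (j+1)) / 2 - alpha / 2 * (ρ (j+1) - ρ j))
        - ((f (ρ (j-1)) * v (j-1) + f (ρ j) * v j) / 2 - alpha / 2 * (ρ j - ρ (j-1)))) := by
  have hMV : 0 ≤ M * V :=
    mul_nonneg ((abs_nonneg _).trans (hf' 0)) ((hv 0).1.trans (hv 0).2)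
  have hlamAlpha : lam * alpha ≤ 1 := by nlinarith
  have hflux (i : ℤ) : |f (ρ i) * v i| ≤ alpha * ρ i := by
    simpa only [abs_of_nonneg (hρ i)] using
      abs_mul_le_of_abs_le_mul (abs_le_mul_abs_of_abs_deriv_le hf hf0 hf' (ρ i)) (hv i) halpha
  intro j
  exact laxFriedrichs_step_nonneg hlam.le hlamAlpha (hρ j) (hflux (j - 1)) (hflux (j + 1))
end
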